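/- Let F be the free group on the two generators x and y. The normal closure in F of the set { [x, w x w⁻¹] : w ∈ F } ∪ { [y, w y w⁻¹] : w ∈ F } equals the third lower central series subgroup F₃ = γ₃(F). Consequently the Milnor group MF = F/⟨⟨[x, w x w⁻¹], [y, w y w⁻¹] : w ∈ F⟩⟩ of the free group on two generators is isomorphic to F/F₃. -/

import Mathlib

/-- The free group on two generators `x` and `y`. -/
abbrev F : Type := FreeGroup (Fin 2)

/-- The first generator `x`. -/
def x : F := FreeGroup.of 0

/-- The second generator `y`. -/
def y : F := FreeGroup.of 1

open scoped commutatorElement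

/-- The set `{ [x, w x w⁻¹] : w ∈ F } ∪ { [y, w y w⁻¹] : w ∈ F }` of Milnor relators. -/
def milnorRelators : Set F :=
  {g | ∃ w : F, g = ⁅x, w * x * w⁻¹⁆} ∪ {g | ∃ w : F, g = ⁅y, w * y * w⁻¹⁆}

/-- The Milnor group `MF` of the free group on two generators. -/
def MilnorF : Type := F ⧸ Subgroup.normalClosure milnorRelators

instance : (Subgroup.normalClosure milnorRelators).Normal := Subgroup.normalClosure_normal

noncomputable instance : Group MilnorF :=
  inferInstanceAs (Group (F ⧸ Subgroup.normalClosure milnorRelators))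

section Aux

open Subgroup

variable {G : Type*} [Group G]

/-- Conjugates of a Milnor-type element pairwise commute. -/
lemma conj_comm_of_milnor (u : G) (hu : ∀ g : G, ⁅u, g * u * g⁻¹⁆ = 1)
    (g h : G) : Commute (g * u * g⁻¹) (h * u * h⁻¹) := by
  have h1 := hu (g⁻¹ * h)
  have h2 : (MulAut.conj g).toMonoidHom ⁅u, (g⁻¹ * h) * u * (g⁻¹ * h)⁻¹⁆ = 1 := by
    rw [h1]; simp
  rw [map_commutatorElement] at h2
  have h3 : (MulAut.conj g).toMonoidHom ((g⁻¹ * h) * u * (g⁻¹ * h)⁻¹) = h * u * h⁻¹ := by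
    simp only [MulEquiv.coe_toMonoidHom, MulAut.conj_apply]
    group
  have h4 : (MulAut.conj g).toMonoidHom u = g * u * g⁻¹ := by
    simp [MulAut.conj_apply]
  rw [h3, h4, commutatorElement_eq_one_iff_commute] at h2
  exact h2

/-- The normal closure of a Milnor-type element is abelian. -/
lemma normalClosure_le_centralizer (u : G) (hu : ∀ g : G, ⁅u, g * u * g⁻¹⁆ = 1) :
    Subgroup.normalClosure {u} ≤ centralizer (Subgroup.normalClosure ({u} : Set G) : Set G) := by
  have hmem : ∀ c ∈ Group.conjugatesOfSet ({u} : Set G), ∃ g : G, g * u * g⁻¹ = c := by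
    intro c hc
    rcases Group.mem_conjugatesOfSet_iff.1 hc with ⟨a, ha, hconj⟩
    rcases isConj_iff.1 hconj with ⟨g, hg⟩
    exact ⟨g, by rw [Set.mem_singleton_iff.mp ha] at hg; exact hg⟩
  show closure (Group.conjugatesOfSet ({u} : Set G)) ≤ _
  rw [closure_le]
  intro c hc
  rcases hmem c hc with ⟨g, rfl⟩
  rw [SetLike.mem_coe, mem_centralizer_iff]
  intro z hz
  rw [SetLike.mem_coe] at hz
  have hz' : z ∈ closure (Group.conjugatesOfSet ({u} : Set G)) := hz
  clear hz
  have : Commute z (g * u * g⁻¹) := by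
    induction hz' using Subgroup.closure_induction with
    | mem d hd =>
        rcases hmem d hd with ⟨h, rfl⟩
        exact conj_comm_of_milnor u hu h g
    | one => exact Commute.one_left _
    | mul p q _ _ hp hq => exact hp.mul_left hq
    | inv p _ hp => exact hp.inv_left
  exact this

/-- If `G` is generated by `a` and `b`, the commutator subgroup lies in the
normal closure of `a` (since `G` modulo that normal closure is cyclic). -/
lemma commutator_le_normalClosure_left (a b : G)
    (hgen : closure ({a, b} : Set G) = ⊤) :
    ⁅(⊤ : Subgroup G), ⊤⁆ ≤ Subgroup.normalClosure {a} := by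
  rw [Subgroup.commutator_le]
  intro g _ h _
  rw [← QuotientGroup.eq_one_iff]
  have hmap : ((⁅g, h⁆ : G) : G ⧸ Subgroup.normalClosure ({a} : Set G))
      = ⁅((g : G) : G ⧸ Subgroup.normalClosure ({a} : Set G)),
          ((h : G) : G ⧸ Subgroup.normalClosure ({a} : Set G))⁆ :=
    map_commutatorElement (QuotientGroup.mk' (Subgroup.normalClosure ({a} : Set G))) g h
  rw [hmap, commutatorElement_eq_one_iff_commute]
  have hb : ∀ z : G ⧸ Subgroup.normalClosure ({a} : Set G),
      z ∈ Subgroup.zpowers ((b : G) : G ⧸ Subgroup.normalClosure ({a} : Set G)) := by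
    have hsurj : Function.Surjective (QuotientGroup.mk' (Subgroup.normalClosure ({a} : Set G))) :=
      QuotientGroup.mk'_surjective _
    have htop : Subgroup.map (QuotientGroup.mk' (Subgroup.normalClosure ({a} : Set G)))
        (closure ({a, b} : Set G)) = ⊤ := by
      rw [hgen, Subgroup.map_top_of_surjective _ hsurj]
    rw [MonoidHom.map_closure] at htop
    have hle : closure ((QuotientGroup.mk' (Subgroup.normalClosure ({a} : Set G))) '' {a, b})
        ≤ Subgroup.zpowers ((b : G) : G ⧸ Subgroup.normalClosure ({a} : Set G)) := by
      rw [closure_le]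
      rintro _ ⟨c, hc, rfl⟩
      rcases hc with rfl | rfl
      · have h1 : (QuotientGroup.mk' (Subgroup.normalClosure ({c} : Set G))) c = 1 :=
          (QuotientGroup.eq_one_iff c).2 (subset_normalClosure rfl)
        rw [h1]
        exact Subgroup.one_mem _
      · exact Subgroup.mem_zpowers _
    intro z
    exact hle (htop ▸ Subgroup.mem_top z : z ∈ _)
  obtain ⟨m, hm⟩ := hb ((g : G) : G ⧸ Subgroup.normalClosure ({a} : Set G))
  obtain ⟨n, hn⟩ := hb ((h : G) : G ⧸ Subgroup.normalClosure ({a} : Set G))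
  rw [← hm, ← hn]
  exact Commute.zpow_zpow (Commute.refl _) m n

/-- A group generated by two Milnor-type elements is nilpotent of class at most 2. -/
lemma milnor_lcs_eq_bot (a b : G) (hgen : closure ({a, b} : Set G) = ⊤)
    (ha : ∀ g : G, ⁅a, g * a * g⁻¹⁆ = 1) (hb : ∀ g : G, ⁅b, g * b * g⁻¹⁆ = 1) :
    (⊤ : Subgroup G).lowerCentralSeries 2 = ⊥ := by
  have hgen' : closure ({b, a} : Set G) = ⊤ := by rwa [Set.pair_comm]
  have hA := commutator_le_normalClosure_left a b hgen
  have hB := commutator_le_normalClosure_left b a hgen'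
  have hAab := normalClosure_le_centralizer a ha
  have hBab := normalClosure_le_centralizer b hb
  -- the commutator subgroup is central
  have hcent : ⁅(⊤ : Subgroup G), ⊤⁆ ≤ centralizer ((⊤ : Subgroup G) : Set G) := by
    intro z hz
    have hzA := hA hz
    have hzB := hB hz
    rw [mem_centralizer_iff]
    intro g _
    have hg : g ∈ closure ({a, b} : Set G) := hgen ▸ Subgroup.mem_top g
    have : g ∈ centralizer ({z} : Set G) := by
      have hle : closure ({a, b} : Set G) ≤ centralizer ({z} : Set G) := by
        rw [closure_le]
        rintro c (rfl | rfl)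
        · rw [SetLike.mem_coe, mem_centralizer_iff]
          rintro w rfl
          exact (hAab hzA c (subset_normalClosure rfl)).symm
        · rw [SetLike.mem_coe, mem_centralizer_iff]
          rintro w rfl
          exact (hBab hzB c (subset_normalClosure rfl)).symm
      exact hle hg
    rw [mem_centralizer_iff] at this
    exact (this z rfl).symm
  have hbot : ⁅(⁅(⊤ : Subgroup G), ⊤⁆ : Subgroup G), (⊤ : Subgroup G)⁆ = (⊥ : Subgroup G) :=
    Subgroup.commutator_eq_bot_iff_le_centralizer.2 hcent
  have h2 : (⊤ : Subgroup G).lowerCentralSeries 2 = ⁅(⁅(⊤ : Subgroup G), ⊤⁆ : Subgroup G), (⊤ : Subgroup G)⁆ := by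
    rw [show (⊤ : Subgroup G).lowerCentralSeries 2 = ⁅(⊤ : Subgroup G).lowerCentralSeries 1, ⊤⁆ from rfl,
      show (⊤ : Subgroup G).lowerCentralSeries 1 = ⁅(⊤ : Subgroup G), ⊤⁆ from rfl]
  rw [h2, hbot]

end Aux

lemma closure_xy : Subgroup.closure ({x, y} : Set F) = ⊤ := by
  rw [eq_top_iff, ← FreeGroup.closure_range_of (Fin 2)]
  apply Subgroup.closure_mono
  rintro _ ⟨i, rfl⟩
  fin_cases i
  · exact Or.inl rfl
  · exact Or.inr rfl

/-- the normal closure in `F` of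
`{ [x, w x w⁻¹] : w ∈ F } ∪ { [y, w y w⁻¹] : w ∈ F }` equals the third lower central
series subgroup `F₃ = γ₃(F)` (`(⊤ : Subgroup F).lowerCentralSeries 2` in Mathlib's indexing), and
consequently the Milnor group `MF` is isomorphic to `F/F₃`. -/
theorem milnor_normalClosure_eq_gamma3 :
    Subgroup.normalClosure milnorRelators = (⊤ : Subgroup F).lowerCentralSeries 2 ∧
      Nonempty (MilnorF ≃* (F ⧸ (⊤ : Subgroup F).lowerCentralSeries 2)) := by
  set N := Subgroup.normalClosure milnorRelators with hN
  have heq : N = (⊤ : Subgroup F).lowerCentralSeries 2 := by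
    apply le_antisymm
    · -- relators lie in γ₃
      apply Subgroup.normalClosure_le_normal
      have key : ∀ u w : F, ⁅u, w * u * w⁻¹⁆ ∈ (⊤ : Subgroup F).lowerCentralSeries 2 := by
        intro u w
        have hid : ⁅u, w * u * w⁻¹⁆ = ⁅u, ⁅w, u⁆⁆ := by
          simp only [commutatorElement_def]
          group
        rw [hid]
        have h2 : (⊤ : Subgroup F).lowerCentralSeries 2 = ⁅(⊤ : Subgroup F).lowerCentralSeries 1, ⊤⁆ := rfl
        rw [h2, Subgroup.commutator_comm]
        refine Subgroup.commutator_mem_commutator (Subgroup.mem_top u) ?_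
        rw [show (⊤ : Subgroup F).lowerCentralSeries 1 = ⁅(⊤ : Subgroup F), ⊤⁆ from rfl]
        exact Subgroup.commutator_mem_commutator (Subgroup.mem_top w) (Subgroup.mem_top u)
      rintro g (⟨w, rfl⟩ | ⟨w, rfl⟩)
      · exact key x w
      · exact key y w
    · -- γ₃ lies in the normal closure: F/N is nilpotent of class 2
      have hrel : ∀ u : F, (∀ w : F, ⁅u, w * u * w⁻¹⁆ ∈ N) →
          ∀ g : F ⧸ N, ⁅((u : F) : F ⧸ N), g * ((u : F) : F ⧸ N) * g⁻¹⁆ = 1 := by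
        intro u hu g
        obtain ⟨w, rfl⟩ := QuotientGroup.mk'_surjective N g
        have : ((⁅u, w * u * w⁻¹⁆ : F) : F ⧸ N) = 1 := (QuotientGroup.eq_one_iff _).2 (hu w)
        calc ⁅((u : F) : F ⧸ N), (QuotientGroup.mk' N) w * ((u : F) : F ⧸ N)
              * ((QuotientGroup.mk' N) w)⁻¹⁆
            = (QuotientGroup.mk' N) ⁅u, w * u * w⁻¹⁆ := by
              rw [map_commutatorElement]
              simp
          _ = 1 := this
      have hx : ∀ w : F, ⁅x, w * x * w⁻¹⁆ ∈ N :=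
        fun w => Subgroup.subset_normalClosure (Or.inl ⟨w, rfl⟩)
      have hy : ∀ w : F, ⁅y, w * y * w⁻¹⁆ ∈ N :=
        fun w => Subgroup.subset_normalClosure (Or.inr ⟨w, rfl⟩)
      have hgenQ : Subgroup.closure ({((x : F) : F ⧸ N), ((y : F) : F ⧸ N)} : Set (F ⧸ N)) = ⊤ := by
        have := congrArg (Subgroup.map (QuotientGroup.mk' N)) closure_xy
        rw [MonoidHom.map_closure, Subgroup.map_top_of_surjective _
          (QuotientGroup.mk'_surjective N)] at this
        rw [Set.image_pair] at this
        exact this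
      have hq : (⊤ : Subgroup (F ⧸ N)).lowerCentralSeries 2 = ⊥ :=
        milnor_lcs_eq_bot _ _ hgenQ (hrel x hx) (hrel y hy)
      intro g hg
      have hmem : (QuotientGroup.mk' N) g ∈ (⊤ : Subgroup (F ⧸ N)).lowerCentralSeries 2 :=
        Subgroup.lowerCentralSeries.map (QuotientGroup.mk' N) 2 (Subgroup.mem_map_of_mem _ hg)
      rw [hq, Subgroup.mem_bot] at hmem
      rwa [← QuotientGroup.ker_mk' N, MonoidHom.mem_ker]
  refine ⟨heq, ⟨?_⟩⟩
  exact QuotientGroup.quotientMulEquivOfEq heq
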